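/- arXiv:1612.07060 — 4 statements merged into one kernel-verified Lean document; each statement's English description precedes it below -/
import Mathlib

section
/- Let p be an odd prime, m an odd positive integer, q = p^m, and Tr : F_q → F_p the trace map. Let u be a positive integer with gcd(m, u) = v such that m/v is odd (automatic since m is odd). Then the number of x in F_q with Tr(x^(p^u + 1)) = 0 equals p^(m-1). -/
/-!
Since `gcd (p ^ u + 1, p ^ m - 1) = 2`, the maps `x ↦ x ^ (p ^ u + 1)` and `x ↦ x ^ 2` have fibres
of the same size over every point of `F`, so the exponent may be replaced by `2`. The number of
square roots of `y` is `1 + χ y` for the quadratic character `χ` of `F`, hence the count is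
`#(ker Tr) + ∑ y ∈ ker Tr, χ y`. Multiplication by a nonsquare `c` of `ZMod p` preserves `ker Tr`,
and `c` remains a nonsquare in `F`, its quadratic character there being the `m`-th power of its
Legendre symbol with `m` odd; so the character sum vanishes. Finally `#(ker Tr) = p ^ (m - 1)` because the trace is surjective.
-/

open Finset Module

theorem Nat.gcd_pow_add_one_pow_sub_one {p m : ℕ} (hp : Odd p) (hm : Odd m) (u : ℕ) :
    (p ^ u + 1).gcd (p ^ m - 1) = 2 := by
  have hpu : 1 ≤ p ^ u := Nat.one_le_pow _ _ hp.pos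
  have h_dvd_sq : p ^ u + 1 ∣ p ^ (2 * u) - 1 :=
    ⟨p ^ u - 1, by rw [pow_mul', ← one_pow 2, Nat.sq_sub_sq, one_pow]⟩
  have h_gcd : (2 * u).gcd m = u.gcd m :=
    Nat.Coprime.gcd_mul_left_cancel u (Nat.coprime_two_left.mpr hm)
  have h_dvd_pred : (p ^ u + 1).gcd (p ^ m - 1) ∣ p ^ u - 1 :=
    calc (p ^ u + 1).gcd (p ^ m - 1) ∣ (p ^ (2 * u) - 1).gcd (p ^ m - 1) :=
          Nat.gcd_dvd_gcd_of_dvd_left _ h_dvd_sq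
      _ = (p ^ u - 1).gcd (p ^ m - 1) := by simp only [Nat.pow_sub_one_gcd_pow_sub_one, h_gcd]
      _ ∣ p ^ u - 1 := Nat.gcd_dvd_left _ _
  refine Nat.dvd_antisymm ?_ (Nat.dvd_gcd ?_ ?_)
  · have := Nat.dvd_sub (Nat.gcd_dvd_left _ _) h_dvd_pred
    rwa [show p ^ u + 1 - (p ^ u - 1) = 2 by omega] at this
  · exact (hp.pow.add_one).two_dvd
  · exact (Nat.Odd.sub_odd hp.pow odd_one).two_dvd

section CommGroup
variable {G : Type*} [CommGroup G] [Fintype G]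

theorem pow_eq_one_iff_pow_gcd_card_eq_one (x : G) (a : ℕ) :
    x ^ a = 1 ↔ x ^ a.gcd (Fintype.card G) = 1 := by
  simp [pow_gcd_eq_one, pow_card_eq_one]

theorem exists_pow_eq_iff_exists_pow_gcd_card_eq (y : G) (a : ℕ) :
    (∃ x, x ^ a = y) ↔ ∃ x, x ^ a.gcd (Fintype.card G) = y := by
  constructor
  · rintro ⟨x, rfl⟩
    refine ⟨x ^ (a / a.gcd (Fintype.card G)), ?_⟩
    rw [← pow_mul, Nat.div_mul_cancel (Nat.gcd_dvd_left _ _)]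
  · rintro ⟨x, rfl⟩
    refine ⟨x ^ a.gcdA (Fintype.card G), ?_⟩
    rw [← zpow_natCast, ← zpow_natCast, ← zpow_mul, Nat.gcd_eq_gcd_ab, zpow_add,
      zpow_mul x _ (a.gcdB _), zpow_natCast x (Fintype.card G), pow_card_eq_one, one_zpow, mul_one,
      mul_comm]

theorem card_pow_eq_eq_card_pow_gcd_card_eq [DecidableEq G] (a : ℕ) (y : G) :
    #{x : G | x ^ a = y} = #{x : G | x ^ a.gcd (Fintype.card G) = y} := by
  by_cases hy : ∃ x : G, x ^ a = y
  · have hy' := (exists_pow_eq_iff_exists_pow_gcd_card_eq y a).mp hy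
    calc #{x : G | x ^ a = y} = #{x : G | x ^ a = 1} :=
          MonoidHom.card_fiber_eq_of_mem_range (powMonoidHom a) hy ⟨1, one_pow a⟩
      _ = #{x : G | x ^ a.gcd (Fintype.card G) = 1} := by
          simp_rw [pow_eq_one_iff_pow_gcd_card_eq_one _ a]
      _ = #{x : G | x ^ a.gcd (Fintype.card G) = y} :=
          MonoidHom.card_fiber_eq_of_mem_range (powMonoidHom _) ⟨1, one_pow _⟩ hy'
  · have hy' := (exists_pow_eq_iff_exists_pow_gcd_card_eq y a).not.mp hy
    push Not at hy hy'
    simp only [filter_false_of_mem, mem_univ, hy, hy', not_false_eq_true, implies_true, card_empty]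

end CommGroup

section GroupWithZero
variable {M : Type*} [CommGroupWithZero M] [Fintype M] [DecidableEq M]

theorem card_pow_eq_eq_card_units_pow_eq {n : ℕ} (hn : n ≠ 0) {y : M} (hy : y ≠ 0) :
    #{x : M | x ^ n = y} = #{u : Mˣ | u ^ n = Units.mk0 y hy} := by
  rw [← card_map ⟨Units.val, Units.val_injective⟩]
  congr 1
  ext x
  simp only [mem_filter, mem_univ, true_and, mem_map, Function.Embedding.coeFn_mk]
  constructor
  · rintro rfl
    have hx : x ≠ 0 := by rintro rfl; exact hy (zero_pow hn)
    exact ⟨Units.mk0 x hx, Units.ext (by simp), rfl⟩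
  · rintro ⟨u, hu, rfl⟩
    simpa using congrArg Units.val hu

theorem card_pow_eq_eq_of_gcd_eq {a b : ℕ} (ha : a ≠ 0) (hb : b ≠ 0)
    (h : a.gcd (Fintype.card M - 1) = b.gcd (Fintype.card M - 1)) (y : M) :
    #{x : M | x ^ a = y} = #{x : M | x ^ b = y} := by
  by_cases hy : y = 0
  · simp [hy, pow_eq_zero_iff, ha, hb]
  rw [card_pow_eq_eq_card_units_pow_eq ha hy, card_pow_eq_eq_card_units_pow_eq hb hy,
    card_pow_eq_eq_card_pow_gcd_card_eq, card_pow_eq_eq_card_pow_gcd_card_eq b,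
    Fintype.card_units, h]

theorem card_filter_pow_eq_of_gcd_eq {a b : ℕ} (ha : a ≠ 0) (hb : b ≠ 0)
    (h : a.gcd (Fintype.card M - 1) = b.gcd (Fintype.card M - 1))
    (P : M → Prop) [DecidablePred P] :
    #{x : M | P (x ^ a)} = #{x : M | P (x ^ b)} := by
  have h_fiberwise (n : ℕ) : #{x : M | P (x ^ n)} = ∑ y with P y, #{x : M | x ^ n = y} := by
    rw [sum_card_fiberwise_eq_card_filter]
    simp
  rw [h_fiberwise, h_fiberwise]
  exact sum_congr rfl fun y _ => card_pow_eq_eq_of_gcd_eq ha hb h y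

end GroupWithZero

theorem Nat.div_two_mul_geom_sum {q : ℕ} (hq : Odd q) (d : ℕ) :
    q ^ d / 2 = q / 2 * ∑ i ∈ range d, q ^ i := by
  obtain ⟨k, rfl⟩ := hq
  rw [← geom_sum_mul_add (2 * k) d, show (2 * k + 1) / 2 = k by omega]
  generalize ∑ i ∈ range d, (2 * k + 1) ^ i = S
  rw [show S * (2 * k) + 1 = 2 * (k * S) + 1 by ring]
  omega

theorem FiniteField.pow_card_pow_div_two {K : Type*} [Field K] [Fintype K]
    (hK : Odd (Fintype.card K)) (a : K) (d : ℕ) :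
    a ^ (Fintype.card K ^ d / 2) = (a ^ (Fintype.card K / 2)) ^ d := by
  rw [Nat.div_two_mul_geom_sum hK, mul_sum, ← prod_pow_eq_pow_sum]
  simp_rw [mul_comm _ (Fintype.card K ^ _), pow_mul, FiniteField.pow_card_pow]
  simp [prod_const, card_range]

section FieldExtension

variable {K L : Type*} [Field K] [Fintype K] [DecidableEq K] [Field L] [Fintype L] [Algebra K L]

theorem quadraticChar_algebraMap [DecidableEq L] (hK : ringChar K ≠ 2) (a : K) :
    quadraticChar L (algebraMap K L a) = quadraticChar K a ^ finrank K L := by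
  have hL : ringChar L ≠ 2 := by rwa [← Algebra.ringChar_eq K L]
  have h_quad : (quadraticChar K a ^ finrank K L) ∈ ({0, 1, -1} : Set ℤ) := by
    rcases quadraticChar_isQuadratic K a with h | h | h <;> rw [h]
    · simp [zero_pow finrank_pos.ne']
    · simp
    · rcases neg_one_pow_eq_or ℤ (finrank K L) with h' | h' <;> simp [h']
  refine Int.cast_injOn_of_ringChar_ne_two hL (quadraticChar_isQuadratic L _) h_quad ?_
  rw [quadraticChar_eq_pow_of_char_ne_two' hL, Int.cast_pow, ← map_intCast (algebraMap K L),
    quadraticChar_eq_pow_of_char_ne_two' hK, card_eq_pow_finrank (K := K), ← map_pow, ← map_pow,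
    FiniteField.pow_card_pow_div_two (Nat.odd_iff.mpr (FiniteField.odd_card_of_char_ne_two hK))]

theorem card_trace_eq_zero_mul_card :
    #{y : L | Algebra.trace K L y = 0} * Fintype.card K = Fintype.card L := by
  let f := (Algebra.trace K L).toAddMonoidHom
  have h_range : f.range = ⊤ := AddMonoidHom.range_eq_top.mpr (Algebra.trace_surjective K L)
  have := f.ker.card_mul_index
  rw [AddSubgroup.index_ker, h_range, AddSubgroup.card_top] at this
  simpa [Nat.card_eq_fintype_card, Fintype.card_subtype, f] using this

theorem sum_quadraticChar_trace_eq_zero [DecidableEq L] (hK : ringChar K ≠ 2)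
    (hd : Odd (finrank K L)) :
    ∑ y : L with Algebra.trace K L y = 0, quadraticChar L y = 0 := by
  obtain ⟨c, hc⟩ := quadraticChar_exists_neg_one hK
  have hc0 : algebraMap K L c ≠ 0 := by
    rintro h
    simp [(map_eq_zero _).mp h] at hc
  have hC : quadraticChar L (algebraMap K L c) = -1 := by
    rw [quadraticChar_algebraMap hK, hc, hd.neg_one_pow]
  have h_trace (k : K) (y : L) :
      Algebra.trace K L (algebraMap K L k * y) = k * Algebra.trace K L y := by
    rw [← Algebra.smul_def, map_smul, smul_eq_mul]
  set S := ∑ y : L with Algebra.trace K L y = 0, quadraticChar L y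
  have h_scale : S = quadraticChar L (algebraMap K L c) * S := by
    calc S = ∑ y : L with Algebra.trace K L y = 0, quadraticChar L (algebraMap K L c * y) := by
          refine sum_nbij' ((algebraMap K L c)⁻¹ * ·) (algebraMap K L c * ·) ?_ ?_ ?_ ?_ ?_
          · intro y hy
            simp_all [← map_inv₀]
          · intro y hy; simp_all
          · intro y _; simp [hc0]
          · intro y _; simp [hc0]
          · intro y _; simp [hc0]
      _ = quadraticChar L (algebraMap K L c) * S := by simp only [map_mul, S, mul_sum]
  rw [hC] at h_scale
  linarith

theorem card_trace_sq_eq_zero [DecidableEq L] (hK : ringChar K ≠ 2) (hd : Odd (finrank K L)) :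
    #{x : L | Algebra.trace K L (x ^ 2) = 0} = #{y : L | Algebra.trace K L y = 0} := by
  have hL : ringChar L ≠ 2 := by rwa [← Algebra.ringChar_eq K L]
  have h_fiberwise : #{x : L | Algebra.trace K L (x ^ 2) = 0} =
      ∑ y : L with Algebra.trace K L y = 0, #{x : L | x ^ 2 = y} := by
    rw [sum_card_fiberwise_eq_card_filter]
    congr 1
    ext
    simp
  have h_sqrts (y : L) : (#{x : L | x ^ 2 = y} : ℤ) = quadraticChar L y + 1 := by
    rw [← quadraticChar_card_sqrts hL]
    simp
  zify
  rw [h_fiberwise, Nat.cast_sum, sum_congr rfl fun y _ => h_sqrts y, sum_add_distrib,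
    sum_quadraticChar_trace_eq_zero hK hd]
  simp

end FieldExtension

open scoped Classical in
theorem stmt_7_general (p m u : ℕ) [Fact p.Prime] (hp : Odd p) (hm : Odd m)
    (F : Type*) [Field F] [Fintype F] [Algebra (ZMod p) F]
    (hF : Fintype.card F = p ^ m) :
    (Finset.univ.filter (fun x : F =>
        Algebra.trace (ZMod p) F (x ^ (p ^ u + 1)) = 0)).card = p ^ (m - 1) := by
  have h_char : ringChar (ZMod p) ≠ 2 := by
    rw [ZMod.ringChar_zmod_n]
    rintro rfl
    exact Nat.not_odd_iff_even.mpr even_two hp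
  have h_finrank : finrank (ZMod p) F = m := by
    have h_card := card_eq_pow_finrank (K := ZMod p) (V := F)
    rw [hF, ZMod.card] at h_card
    exact (Nat.pow_right_injective (Fact.out : p.Prime).two_le h_card).symm
  have h_gcd : (p ^ u + 1).gcd (Fintype.card F - 1) = (2).gcd (Fintype.card F - 1) := by
    rw [hF, Nat.gcd_pow_add_one_pow_sub_one hp hm,
      Nat.gcd_eq_left (Nat.Odd.sub_odd hp.pow odd_one).two_dvd]
  have h_ker := card_trace_eq_zero_mul_card (K := ZMod p) (L := F)
  rw [hF, ZMod.card, ← pow_sub_one_mul hm.pos.ne'] at h_ker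
  calc #{x : F | Algebra.trace (ZMod p) F (x ^ (p ^ u + 1)) = 0}
      = #{x : F | Algebra.trace (ZMod p) F (x ^ 2) = 0} :=
        card_filter_pow_eq_of_gcd_eq (Nat.add_one_ne_zero _) two_ne_zero h_gcd
          (Algebra.trace (ZMod p) F · = 0)
    _ = #{y : F | Algebra.trace (ZMod p) F y = 0} := card_trace_sq_eq_zero h_char (h_finrank ▸ hm)
    _ = p ^ (m - 1) := Nat.eq_of_mul_eq_mul_right (Fact.out : p.Prime).pos h_ker

open scoped Classical in
theorem stmt_7 (p m u : ℕ) [Fact p.Prime] (hp : Odd p) (hm : Odd m) (hu : 0 < u)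
    (F : Type*) [Field F] [Fintype F] [Algebra (ZMod p) F]
    (hF : Fintype.card F = p ^ m) :
    (Finset.univ.filter (fun x : F =>
        Algebra.trace (ZMod p) F (x ^ (p ^ u + 1)) = 0)).card = p ^ (m - 1) :=
  stmt_7_general p m u hp hm F hF
end

section
/- Let p be an odd prime, q = p^m, and u a positive integer with v = gcd(m, u) such that m/v ≡ 0 (mod 4). Then the number of c in F_q such that the equation X^(p^(2u)) + X = c^(p^u) has a solution X in F_q equals p^(m - 2v). -/
/-!
The map `T x = x ^ p ^ (2 * u) + x` is additive and `c ↦ c ^ p ^ u` is a bijection of `F`, so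
the count is `|F| / |ker T|`. A root of `T` satisfies `x ^ p ^ (4 * u) = x`; together with
`x ^ p ^ m = x` this gives `x ^ p ^ (4 * v) = x`, and as `u / v` is odd,
`2 * u ≡ 2 * v [MOD 4 * v]`, so `ker T` is the set of roots of `X ^ p ^ (2 * v) + X`. That
polynomial is separable and divides `X ^ p ^ (4 * v) - X`, hence `X ^ p ^ m - X`, which splits
over `F`; so it has `p ^ (2 * v)` roots.
-/

open Finset Polynomial Function

theorem Nat.odd_div_gcd_of_even_div_gcd {m u : ℕ} (hm : 0 < m) (h : Even (m / m.gcd u)) :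
    Odd (u / m.gcd u) :=
  Nat.Coprime.odd_of_left <|
    (Nat.coprime_div_gcd_div_gcd (Nat.gcd_pos_of_pos_left u hm)).coprime_dvd_left h.two_dvd

theorem Nat.two_mul_modEq_two_mul_gcd {m u : ℕ} (hm : 0 < m) (h : Even (m / m.gcd u)) :
    2 * u ≡ 2 * m.gcd u [MOD 4 * m.gcd u] := by
  obtain ⟨t, ht⟩ := Nat.odd_div_gcd_of_even_div_gcd hm h
  have hu : u = m.gcd u * (2 * t + 1) := by
    rw [← ht, Nat.mul_div_cancel' (Nat.gcd_dvd_right m u)]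
  calc 2 * u = 2 * m.gcd u + 4 * m.gcd u * t := by nth_rw 1 [hu]; ring
    _ ≡ 2 * m.gcd u [MOD 4 * m.gcd u] := Nat.add_mul_mod_self_left ..

theorem AddMonoidHom.card_filter_exists_eq_mul_card_ker {G : Type*} [AddGroup G] [Fintype G]
    [DecidableEq G] (T : G →+ G) (e : G ≃ G) :
    #{c | ∃ x, T x = e c} * #{x | T x = 0} = Fintype.card G := by
  have hrange : #{c | ∃ x, T x = e c} = Nat.card T.range := by
    rw [← Fintype.card_subtype, ← Nat.card_eq_fintype_card]
    exact Nat.card_congr (e.subtypeEquiv fun c => by simp [AddMonoidHom.mem_range])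
  have hker : #{x | T x = 0} = Nat.card T.ker := by
    rw [← Fintype.card_subtype, ← Nat.card_eq_fintype_card]
    rfl
  rw [hrange, hker, mul_comm, ← AddSubgroup.index_ker, AddSubgroup.card_mul_index,
    Nat.card_eq_fintype_card]

section Frobenius

variable {R : Type*} [CommRing R] {p : ℕ} [ExpChar R p]

theorem isPeriodicPt_frobenius_iff {n : ℕ} {x : R} :
    IsPeriodicPt (frobenius R p) n x ↔ x ^ p ^ n = x := by
  rw [IsPeriodicPt, IsFixedPt, iterate_frobenius]

theorem isPeriodicPt_frobenius_two_mul_of_pow_eq_neg {k : ℕ} {x : R} (h : x ^ p ^ k = -x) :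
    IsPeriodicPt (frobenius R p) (2 * k) x := by
  rw [isPeriodicPt_frobenius_iff, two_mul, pow_add, pow_mul, h, ← iterateFrobenius_def,
    map_neg, iterateFrobenius_def, h, neg_neg]

theorem pow_pow_two_mul_add_self_eq_zero_iff {m u : ℕ} (hm : 0 < m) (h : Even (m / m.gcd u))
    {x : R} (hx : x ^ p ^ m = x) :
    x ^ p ^ (2 * u) + x = 0 ↔ x ^ p ^ (2 * m.gcd u) + x = 0 := by
  have hmod := Nat.two_mul_modEq_two_mul_gcd hm h
  simp only [add_eq_zero_iff_eq_neg]
  have hiff (hper : IsPeriodicPt (frobenius R p) (4 * m.gcd u) x) :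
      x ^ p ^ (2 * u) = -x ↔ x ^ p ^ (2 * m.gcd u) = -x := by
    rw [← iterate_frobenius, ← iterate_frobenius, ← hper.iterate_mod_apply, hmod,
      hper.iterate_mod_apply]
  refine ⟨fun hu => (hiff ?_).mp hu, fun hv => (hiff ?_).mpr hv⟩
  · have h4u := isPeriodicPt_frobenius_two_mul_of_pow_eq_neg hu
    refine (h4u.gcd (isPeriodicPt_frobenius_iff.mpr hx)).trans_dvd ?_
    rw [← Nat.gcd_mul_left, ← mul_assoc]
    exact Nat.dvd_gcd (dvd_mul_of_dvd_right (Nat.gcd_dvd_right _ _) 4) (Nat.gcd_dvd_left _ _)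
  · simpa [← mul_assoc] using isPeriodicPt_frobenius_two_mul_of_pow_eq_neg hv

end Frobenius

theorem separable_X_pow_char_pow_add_X {R : Type*} [CommRing R] {p : ℕ} [CharP R p] {k : ℕ}
    (hk : k ≠ 0) : (X ^ p ^ k + X : R[X]).Separable := by
  have hder : derivative (X ^ p ^ k + X : R[X]) = 1 := by
    simp [derivative_X_pow, hk]
  rw [Separable, hder]
  exact isCoprime_one_right

theorem X_pow_char_pow_add_X_dvd {R : Type*} [CommRing R] {p : ℕ} [Fact p.Prime] [CharP R p]
    (k : ℕ) : (X ^ p ^ k + X : R[X]) ∣ X ^ p ^ (2 * k) - X := by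
  have : (X ^ p ^ (2 * k) - X : R[X]) = (X ^ p ^ k + X) ^ p ^ k - (X ^ p ^ k + X) := by
    rw [add_pow_char_pow, ← pow_mul, ← pow_add, two_mul]; ring
  rw [this]
  exact dvd_sub (dvd_pow_self _ (pow_ne_zero _ (Fact.out : p.Prime).ne_zero)) dvd_rfl

theorem card_filter_pow_char_pow_add_self_eq_zero {F : Type*} [Field F] [Fintype F]
    [DecidableEq F] {p : ℕ} [Fact p.Prime] [CharP F p] {k m : ℕ} (hk : k ≠ 0)
    (hkm : 2 * k ∣ m) (hF : Fintype.card F = p ^ m) :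
    #{x : F | x ^ p ^ k + x = 0} = p ^ k := by
  have hp := (Fact.out : p.Prime).one_lt
  set h : F[X] := X ^ p ^ k + X
  have hsep : h.Separable := separable_X_pow_char_pow_add_X hk
  have hdeg : h.natDegree = p ^ k := by
    rw [natDegree_add_eq_left_of_natDegree_lt] <;> simp [Nat.one_lt_pow hk hp]
  have hsplit : Splits (X ^ Fintype.card F - X : F[X]) := by
    rw [splits_iff_card_roots, FiniteField.roots_X_pow_card_sub_X,
      FiniteField.X_pow_card_sub_X_natDegree_eq F Fintype.one_lt_card]
    rfl
  have hdvd : h ∣ X ^ Fintype.card F - X :=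
    (X_pow_char_pow_add_X_dvd k).trans (hF ▸ dvd_pow_pow_sub_self_of_dvd hkm)
  have hroots := (hsplit.of_dvd (FiniteField.X_pow_card_sub_X_ne_zero F Fintype.one_lt_card)
    hdvd).natDegree_eq_card_roots
  have hfilter : ({x : F | x ^ p ^ k + x = 0} : Finset F) = h.roots.toFinset := by
    ext x; simp [h, mem_roots hsep.ne_zero]
  rw [hfilter, Multiset.toFinset_card_of_nodup (nodup_roots hsep), ← hroots, hdeg]

open scoped Classical in
theorem stmt_8_general (p m u : ℕ) [Fact p.Prime] (hm : 0 < m)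
    (v : ℕ) (hv : v = Nat.gcd m u) (h4 : m / v % 4 = 0)
    (F : Type*) [Field F] [Fintype F] [Algebra (ZMod p) F]
    (hF : Fintype.card F = p ^ m) :
    (Finset.univ.filter (fun c : F =>
        ∃ X : F, X ^ p ^ (2 * u) + X = c ^ p ^ u)).card = p ^ (m - 2 * v) := by
  have : CharP F p := charP_of_injective_algebraMap' (ZMod p) p
  have hp := (Fact.out : p.Prime).one_lt
  have hv0 : 0 < v := hv ▸ Nat.gcd_pos_of_pos_left u hm
  have hvm : v ∣ m := hv ▸ Nat.gcd_dvd_left m u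
  have heven : Even (m / m.gcd u) := hv ▸ Nat.even_iff.mpr (by omega)
  have h4v : 2 * (2 * v) ∣ m := by
    rw [← mul_assoc, mul_comm]
    exact Nat.mul_dvd_of_dvd_div hvm (Nat.dvd_of_mod_eq_zero h4)
  have hker : #{x : F | x ^ p ^ (2 * u) + x = 0} = p ^ (2 * v) := by
    rw [← card_filter_pow_char_pow_add_self_eq_zero (by omega) h4v hF]
    congr 1; ext x
    simp only [mem_filter, mem_univ, true_and, hv]
    exact pow_pow_two_mul_add_self_eq_zero_iff hm heven (hF ▸ FiniteField.pow_card x)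
  have hcount := ((iterateFrobenius F p (2 * u)).toAddMonoidHom + AddMonoidHom.id F
    ).card_filter_exists_eq_mul_card_ker (iterateFrobeniusEquiv F p u).toEquiv
  simp only [AddMonoidHom.add_apply, RingHom.toAddMonoidHom_eq_coe, AddMonoidHom.coe_coe,
    iterateFrobenius_def, AddMonoidHom.id_apply, RingEquiv.toEquiv_eq_coe, EquivLike.coe_coe,
    iterateFrobeniusEquiv_def, hker, hF] at hcount
  have h2v : 2 * v ≤ m := by have := Nat.le_of_dvd hm h4v; omega
  rw [← Nat.pow_div h2v (by omega), ← hcount, Nat.mul_div_cancel _ (by positivity)]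

open scoped Classical in
theorem stmt_8 (p m u : ℕ) [Fact p.Prime] (hp : Odd p) (hm : 0 < m) (hu : 0 < u)
    (v : ℕ) (hv : v = Nat.gcd m u) (h4 : m / v % 4 = 0)
    (F : Type*) [Field F] [Fintype F] [Algebra (ZMod p) F]
    (hF : Fintype.card F = p ^ m) :
    (Finset.univ.filter (fun c : F =>
        ∃ X : F, X ^ p ^ (2 * u) + X = c ^ p ^ u)).card = p ^ (m - 2 * v) :=
  stmt_8_general p m u hm v hv h4 F hF
end

section
/- Let p be an odd prime, q = p^m, u a positive integer, v = gcd(m, u), and suppose m/v is odd. Then the map x ↦ x^(p^(2u)) + x is a bijection (permutation) of F_q. -/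
theorem stmt_10 (p m u : ℕ) [Fact p.Prime] (hp : Odd p) (hm : 0 < m) (hu : 0 < u)
    (v : ℕ) (hv : v = Nat.gcd m u) (hodd : Odd (m / v))
    (F : Type*) [Field F] [Fintype F] [Algebra (ZMod p) F]
    (hF : Fintype.card F = p ^ m) :
    Function.Bijective (fun x : F => x ^ p ^ (2 * u) + x) := by
  haveI : CharP F p := charP_of_injective_algebraMap (algebraMap (ZMod p) F).injective p
  rw [← Finite.injective_iff_bijective]
  intro x y h
  simp only at h
  -- set z := x - y
  set z : F := x - y with hz
  have hzeq : z ^ p ^ (2 * u) = -z := by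
    have := sub_pow_char_pow (p := p) (n := 2 * u) x y
    rw [← hz] at this
    rw [this]
    have : x ^ p ^ (2 * u) - y ^ p ^ (2 * u) = -(x - y) := by linear_combination h
    rw [this, hz]
  -- iterate
  have key : ∀ j : ℕ, z ^ p ^ (2 * u * j) = (-1 : F) ^ j * z := by
    intro j
    induction j with
    | zero => simp
    | succ j ih =>
      have hexp : 2 * u * (j + 1) = 2 * u * j + 2 * u := by ring
      rw [hexp, pow_add, pow_mul, ih, mul_pow, hzeq]
      have hoddP : Odd (p ^ (2 * u)) := hp.pow
      have : ((-1 : F) ^ j) ^ p ^ (2 * u) = (-1 : F) ^ j := by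
        rw [← pow_mul, mul_comm, pow_mul, hoddP.neg_one_pow]
      rw [this, pow_succ]
      ring
  -- specialize at t = m / v
  set t := m / v with ht
  have hvm : v ∣ m := hv ▸ Nat.gcd_dvd_left m u
  have hvu : v ∣ u := hv ▸ Nat.gcd_dvd_right m u
  have hmt : m = v * t := (Nat.mul_div_cancel' hvm).symm
  have hexp2 : 2 * u * t = m * (2 * (u / v)) := by
    obtain ⟨w, hw⟩ := hvu
    rw [hmt, hw]
    have hv0 : v ≠ 0 := by
      rintro rfl
      rw [hw] at hu; simp at hu
    rw [Nat.mul_div_cancel_left w (Nat.pos_of_ne_zero hv0)]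
    ring
  have h1 : z ^ p ^ (2 * u * t) = z := by
    rw [hexp2, pow_mul, ← hF]
    exact FiniteField.pow_card_pow _ z
  have h2 := key t
  rw [h1, hodd.neg_one_pow, neg_one_mul] at h2
  -- z = -z implies z = 0
  have hz0 : z = 0 := by
    have h2' : z + z = 0 := by linear_combination h2
    rw [← two_mul] at h2'
    have h2ne : (2 : F) ≠ 0 := by
      intro hc
      have hd := (CharP.cast_eq_zero_iff F p 2).mp (by exact_mod_cast hc)
      have hp2 : p = 2 := (Nat.prime_dvd_prime_iff_eq Fact.out Nat.prime_two).mp hd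
      simp [hp2, Nat.odd_iff] at hp
    exact (mul_eq_zero.mp h2').resolve_left h2ne
  have : x = y := by
    have := hz0
    rw [hz] at this
    exact sub_eq_zero.mp this
  exact this
end

section
/- Let p be an odd prime, q = p^m, u a positive integer, v = gcd(m, u), a ∈ F_q*, and suppose that either m/v is odd, or a^((q-1)/(p^v+1)) ≠ (-1)^(s/v) where s = m/2 (when m/v is even). Then the polynomial f(X) = a^(p^u) X^(p^(2u)) + a X is a permutation polynomial of F_q; equivalently, the equation a^(p^u) X^(p^(2u)) + a X = 0 has only the solution X = 0 in F_q. -/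
open Finset

private lemma geom_nat (x n : ℕ) (hx : 1 ≤ x) :
    (x - 1) * ∑ i ∈ range n, x ^ i = x ^ n - 1 := by
  have h1 : (1:ℕ) ≤ x ^ n := Nat.one_le_pow _ _ hx
  have h := geom_sum_mul (x : ℤ) n
  zify [hx, h1]
  push_cast at h ⊢
  linarith

private lemma sum_pow_mod_two (x n : ℕ) (hx : Odd x) :
    (∑ i ∈ range n, x ^ i) % 2 = n % 2 := by
  induction n with
  | zero => simp
  | succ n ih =>
    rw [Finset.sum_range_succ]
    have hxn : x ^ n % 2 = 1 := Nat.odd_iff.mp hx.pow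
    omega

private lemma neg1pow {F : Type*} [Ring F] (i j : ℕ) (h : i % 2 = j % 2) :
    (-1 : F) ^ i = (-1 : F) ^ j := by
  rcases Nat.even_or_odd i with he | ho
  · have hi := Nat.even_iff.mp he
    rw [he.neg_one_pow, (Nat.even_iff.mpr (by omega : j % 2 = 0)).neg_one_pow]
  · rw [ho.neg_one_pow,
      (Nat.odd_iff.mpr (by have := Nat.odd_iff.mp ho; omega : j % 2 = 1)).neg_one_pow]

private lemma pow_alt {F : Type*} [Field F] (c : F) (t : ℕ) (hc : c ^ (t + 1) = 1) :
    ∀ n, c ^ (∑ i ∈ range (2 * n + 1), t ^ i) = c := by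
  intro n
  induction n with
  | zero => simp
  | succ n ih =>
    have h2 : 2 * (n + 1) + 1 = (2 * n + 1) + 1 + 1 := by ring
    rw [h2, Finset.sum_range_succ, Finset.sum_range_succ, pow_add, pow_add, mul_assoc, ih]
    have hstep : c ^ t ^ (2 * n + 1) * c ^ t ^ (2 * n + 1 + 1) = 1 := by
      rw [← pow_add]
      have he : t ^ (2 * n + 1) + t ^ (2 * n + 1 + 1) = (t + 1) * t ^ (2 * n + 1) := by ring
      rw [he, pow_mul, hc, one_pow]
    rw [hstep, mul_one]

theorem stmt_18 (p m u : ℕ) [Fact p.Prime] (hp : Odd p) (hm : 0 < m) (hu : 0 < u)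
    (v : ℕ) (hv : v = Nat.gcd m u)
    (F : Type*) [Field F] [Fintype F] [Algebra (ZMod p) F]
    (hF : Fintype.card F = p ^ m)
    (a : F) (ha : a ≠ 0)
    (hcond : Odd (m / v) ∨
      (Even (m / v) ∧ a ^ ((p ^ m - 1) / (p ^ v + 1)) ≠ (-1 : F) ^ (m / 2 / v))) :
    Function.Bijective (fun x : F => a ^ p ^ u * x ^ p ^ (2 * u) + a * x) ∧
    (∀ x : F, a ^ p ^ u * x ^ p ^ (2 * u) + a * x = 0 → x = 0) := by
  have hprime : p.Prime := Fact.out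
  have hp2 : 2 < p := by
    have := hprime.two_le
    have := Nat.odd_iff.mp hp
    omega
  haveI : Fact (2 < p) := ⟨hp2⟩
  haveI : CharP F p := charP_of_injective_algebraMap (algebraMap (ZMod p) F).injective p
  have hppos : 0 < p := by omega
  have hvpos : 0 < v := by rw [hv]; exact Nat.gcd_pos_of_pos_left _ hm
  have hvm : v ∣ m := hv ▸ Nat.gcd_dvd_left m u
  have hvu : v ∣ u := hv ▸ Nat.gcd_dvd_right m u
  have hpu1 : 1 ≤ p ^ u := Nat.one_le_pow _ _ hppos
  have hpv1 : 1 ≤ p ^ v := Nat.one_le_pow _ _ hppos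
  have hpvodd : Odd (p ^ v) := hp.pow
  have hker : ∀ x : F, a ^ p ^ u * x ^ p ^ (2 * u) + a * x = 0 → x = 0 := by
    intro x hx
    by_contra hx0
    have hxq : x ^ (p ^ m - 1) = 1 := by
      rw [← hF]; exact FiniteField.pow_card_sub_one_eq_one x hx0
    have haq : a ^ (p ^ m - 1) = 1 := by
      rw [← hF]; exact FiniteField.pow_card_sub_one_eq_one a ha
    have key : a ^ p ^ u * x ^ p ^ (2 * u) = -(a * x) := by
      linear_combination hx
    set z := a * x ^ (p ^ u + 1) with hzdef
    have hz0 : z ≠ 0 := mul_ne_zero ha (pow_ne_zero _ hx0)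
    have hzq : z ^ (p ^ m - 1) = 1 := by
      rw [← hF]; exact FiniteField.pow_card_sub_one_eq_one z hz0
    have hzp : z ^ p ^ u = -z := by
      have e : (p ^ u + 1) * p ^ u = p ^ (2 * u) + p ^ u := by
        rw [two_mul, pow_add]; ring
      calc z ^ p ^ u = a ^ p ^ u * x ^ ((p ^ u + 1) * p ^ u) := by
            rw [hzdef, mul_pow, ← pow_mul]
        _ = a ^ p ^ u * (x ^ p ^ (2 * u) * x ^ p ^ u) := by rw [e, pow_add]
        _ = -(a * x) * x ^ p ^ u := by rw [← mul_assoc, key]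
        _ = -z := by rw [hzdef]; ring
    have hz1 : z ^ (p ^ u - 1) = -1 := by
      have h1 : z ^ (p ^ u - 1) * z = -1 * z := by
        rw [← pow_succ, Nat.sub_add_cancel hpu1, hzp]; ring
      exact mul_right_cancel₀ hz0 h1
    rcases hcond with hodd | ⟨heven, hne⟩
    · -- case m/v odd
      set M := ∑ i ∈ range (m / v), (p ^ v) ^ i with hM
      have hgM : (p ^ v - 1) * M = p ^ m - 1 := by
        rw [hM, geom_nat _ _ hpv1, ← pow_mul, Nat.mul_div_cancel' hvm]
      set K := ∑ i ∈ range (u / v), (p ^ v) ^ i with hK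
      have hgK : (p ^ v - 1) * K = p ^ u - 1 := by
        rw [hK, geom_nat _ _ hpv1, ← pow_mul, Nat.mul_div_cancel' hvu]
      have hMK : (p ^ u - 1) * M = (p ^ m - 1) * K := by
        rw [← hgK, ← hgM]; ring
      have hModd : Odd M := by
        rw [Nat.odd_iff, sum_pow_mod_two _ _ hpvodd, ← Nat.odd_iff]
        exact hodd
      have h1 : z ^ ((p ^ u - 1) * M) = -1 := by
        rw [pow_mul, hz1, hModd.neg_one_pow]
      have h2 : z ^ ((p ^ u - 1) * M) = 1 := by
        rw [hMK, pow_mul, hzq, one_pow]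
      exact CharP.neg_one_ne_one F p (by rw [← h1, h2])
    · -- case m/v even
      have hp2v1 : 1 ≤ p ^ (2 * v) := Nat.one_le_pow _ _ hppos
      have h2vm : 2 * v ∣ m := by
        obtain ⟨r, hr⟩ := heven
        exact ⟨r, by rw [← Nat.mul_div_cancel' hvm, hr]; ring⟩
      set t := m / (2 * v) with ht
      have htm : 2 * v * t = m := Nat.mul_div_cancel' h2vm
      set u' := u / v with hu'
      have hu'odd : Odd u' := by
        have hco : (m / Nat.gcd m u).Coprime (u / Nat.gcd m u) :=
          Nat.coprime_div_gcd_div_gcd (hv ▸ hvpos)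
      -- if u' even, 2 divides gcd(m/v, u/v) = 1
        rw [Nat.odd_iff]
        by_contra h
        have h2u : 2 ∣ u / v := by omega
        have h2m : 2 ∣ m / v := heven.two_dvd
        have : 2 ∣ Nat.gcd (m / v) (u / v) := Nat.dvd_gcd h2m h2u
        rw [hv] at this
        rw [Nat.Coprime] at hco
        omega
      set N := ∑ i ∈ range t, (p ^ (2 * v)) ^ i with hN
      have hgN : (p ^ (2 * v) - 1) * N = p ^ m - 1 := by
        rw [hN, geom_nat _ _ hp2v1, ← pow_mul, htm]
      have hfac : p ^ (2 * v) - 1 = (p ^ v - 1) * (p ^ v + 1) := by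
        zify [hpv1, hp2v1]
        rw [two_mul, pow_add]; ring
      have hfull : ((p ^ v - 1) * N) * (p ^ v + 1) = p ^ m - 1 := by
        rw [← hgN, hfac]; ring
      have hbexp : (p ^ m - 1) / (p ^ v + 1) = (p ^ v - 1) * N :=
        Nat.div_eq_of_eq_mul_left (by positivity) hfull.symm
      set b := a ^ ((p ^ v - 1) * N) with hb
      have hb1 : b ^ (p ^ v + 1) = 1 := by
        rw [hb, ← pow_mul, hfull, haq]
      set K2 := ∑ i ∈ range u', (p ^ (2 * v)) ^ i with hK2
      have hgK2 : (p ^ (2 * v) - 1) * K2 = p ^ (2 * u) - 1 := by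
        rw [hK2, geom_nat _ _ hp2v1, ← pow_mul]
        congr 2
        rw [hu', mul_assoc, Nat.mul_div_cancel' hvu]
      set K := ∑ i ∈ range u', (p ^ v) ^ i with hKd
      have hgK : (p ^ v - 1) * K = p ^ u - 1 := by
        rw [hKd, geom_nat _ _ hpv1, ← pow_mul, hu', Nat.mul_div_cancel' hvu]
      have hx1 : a ^ (p ^ u - 1) * x ^ (p ^ (2 * u) - 1) = -1 := by
        have e : (p ^ u + 1) * (p ^ u - 1) = p ^ (2 * u) - 1 := by
          zify [hpu1, Nat.one_le_pow (2 * u) p hppos]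
          rw [two_mul, pow_add]; ring
        rw [← hz1, hzdef, mul_pow, ← pow_mul, e]
      have hx2 : x ^ ((p ^ (2 * u) - 1) * N) = 1 := by
        have e : (p ^ (2 * u) - 1) * N = (p ^ m - 1) * K2 := by
          rw [← hgK2, ← hgN]; ring
        rw [e, pow_mul, hxq, one_pow]
      have hmain : a ^ ((p ^ u - 1) * N) = (-1 : F) ^ N := by
        calc a ^ ((p ^ u - 1) * N)
            = a ^ ((p ^ u - 1) * N) * x ^ ((p ^ (2 * u) - 1) * N) := by rw [hx2, mul_one]
          _ = (a ^ (p ^ u - 1) * x ^ (p ^ (2 * u) - 1)) ^ N := by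
              rw [mul_pow, pow_mul, pow_mul]
          _ = (-1 : F) ^ N := by rw [hx1]
      have hbK : a ^ ((p ^ u - 1) * N) = b ^ K := by
        rw [hb, ← pow_mul]
        congr 1
        rw [← hgK]; ring
      obtain ⟨r, hr⟩ := hu'odd
      have hbKb : b ^ K = b := by
        have : K = ∑ i ∈ range (2 * r + 1), (p ^ v) ^ i := by
          rw [hKd, hr]
        rw [this]
        exact pow_alt b (p ^ v) hb1 r
      have hNt : (-1 : F) ^ N = (-1 : F) ^ (m / 2 / v) := by
        have h1 : N % 2 = t % 2 := sum_pow_mod_two _ _ hp.pow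
        have h2 : m / 2 / v = t := by
          rw [ht, Nat.div_div_eq_div_mul]
        rw [h2]
        exact neg1pow _ _ h1
      apply hne
      rw [hbexp, ← hb, ← hbKb, ← hbK, hmain, hNt]
  refine ⟨Finite.injective_iff_bijective.mp ?_, hker⟩
  intro x y hxy
  simp only at hxy
  have h0 : a ^ p ^ u * (x - y) ^ p ^ (2 * u) + a * (x - y) = 0 := by
    rw [sub_pow_char_pow]
    linear_combination hxy
  have := hker _ h0
  exact sub_eq_zero.mp this
end
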